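/- For every k ≥ 3 and m ≥ 2, the k-uniform hypergraph H^{k,m} is not (k+2)-interlacing with respect to the order ≺^{k,m}. -/

import Mathlib

/-!
Induction on the level; level `0` has a single edge. Above it a vertex is a root path (a list of
length `< k` over the previous level) ordered lexicographically, and an edge is either contained
in a chain `{x | x <+: L}` or consists of children `l ++ [w]` of one vertex `l`, with `w` ranging
over an edge of the previous level. Only two order facts are used: a proper prefix precedes its
extensions, and every subtree `{y | u <+: y}` is an interval. So in an interlacing sequence
`v₀ < ⋯ < v_{k+1}`:
* if `vᵢ` and `vᵢ₊₂` lie on a common chain, `vᵢ` is a proper prefix of `vᵢ₊₁`; for two chains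
  `v_k` would be a path of length `≥ k`;
* children of `l` and a chain never alternate as child, chain, child, chain: the first chain
  vertex is a proper prefix of the second child, hence a prefix of the first one;
* children of `l₁` and of `l₂` in the pattern `l₁, l₂, l₁` force `l₁ <+: l₂`.
As `k + 2 ≥ 5`, these patterns occur whichever edge plays which role. Two families of children
thus have the same parent, and the last letters of the `vᵢ` interlace the underlying edges one
level down.
-/

/-- Vertex types of the recursively defined hypergraphs `H^{k,m}`:
`HVert k 0 = Fin k` and `HVert k (m+1)` is the vertex set of the full b-ary tree of
depth `k-1` whose branching at every non-leaf vertex is indexed by `HVert k m`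
(so `b = |V(H^{k,m+1})| = |V(T(k, |HVert k m|))|`). The hypergraph `H^{k,m}` from the
paper lives on `HVert k (m-1)`. -/
@[reducible] def HVert (k : ℕ) : ℕ → Type
  | 0 => Fin k
  | m + 1 => {l : List (HVert k m) // l.length < k}

instance HVertDecEq (k m : ℕ) : DecidableEq (HVert k m) := by
  induction m with
  | zero => exact fun a b => inferInstanceAs (Decidable (a = b))
  | succ m ih => exact fun a b => by letI := ih; exact inferInstanceAs (Decidable (a = b))

/-- The canonical DFS (preorder/lexicographic) order on `HVert k m`:
at level 0 the order of `Fin k`; at level `m+1` the lexicographic order on addresses,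
which is a DFS order of the tree compatible with the orders on the copies. -/
def HVertLT (k : ℕ) : (m : ℕ) → HVert k m → HVert k m → Prop
  | 0 => fun a b => a < b
  | m + 1 => fun a b => List.Lex (HVertLT k m) a.1 b.1

/-- The hyperedges of `H^{k,m}` (at level `m`, i.e. of `H^{k,m+1}` in the paper's
numbering when `m ≥ 1`): at level 0 the single hyperedge `Fin k`; at level `m+1`,
the maximal chains of the tree together with, for each non-leaf vertex `l`, the
images of the hyperedges of the level-`m` hypergraph placed on the children of `l`. -/
def HEdge (k : ℕ) : (m : ℕ) → Finset (HVert k m) → Prop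
  | 0 => fun e => e = Finset.univ
  | m + 1 => fun e =>
      (∃ leaf : HVert k (m + 1), leaf.1.length = k - 1 ∧
        e = (Finset.range (leaf.1.length + 1)).image (fun i =>
          (⟨leaf.1.take i, by
              rw [List.length_take]; exact lt_of_le_of_lt (min_le_right _ _) leaf.2⟩ :
            HVert k (m + 1)))) ∨
      (∃ l : List (HVert k m), ∃ h : l.length + 1 < k, ∃ e' : Finset (HVert k m),
        HEdge k m e' ∧
        e = e'.image (fun w => (⟨l ++ [w], by simpa using h⟩ : HVert k (m + 1))))

def IsInterlacing {V : Type*} (lt : V → V → Prop) (e₁ e₂ : Set V) {n : ℕ} (v : Fin n → V) :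
    Prop :=
  (∀ i j, i < j → lt (v i) (v j)) ∧
    ∀ i : Fin n, (Even (i : ℕ) → v i ∈ e₁) ∧ (¬ Even (i : ℕ) → v i ∈ e₂)

namespace List

variable {β : Type*} {r : β → β → Prop}

theorem lex_append_singleton_iff [Std.Irrefl r] {l : List β} {a b : β} :
    Lex r (l ++ [a]) (l ++ [b]) ↔ r a b := by
  induction l with
  | nil => exact lex_singleton_iff a b
  | cons c l ih => exact lex_cons_iff.trans ih

theorem not_lex_of_isPrefix [Std.Irrefl r] {x y : List β} (h : y <+: x) : ¬ Lex r x y := by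
  obtain ⟨t, rfl⟩ := h
  induction y with
  | nil => nofun
  | cons a y ih => exact fun h => ih (lex_cons_iff.1 h)

variable [Std.Asymm r]

theorem IsPrefix.isPrefix_of_lex_of_lex {u x y z : List β} (hx : u <+: x) (hz : u <+: z)
    (hxy : Lex r x y) (hyz : Lex r y z) : u <+: y := by
  induction u generalizing x y z with
  | nil => exact nil_prefix
  | cons a u ih =>
    obtain ⟨t, rfl⟩ := hx
    obtain ⟨t', rfl⟩ := hz
    cases hxy with
    | cons hxy =>
      cases hyz with
      | cons hyz =>
        exact (prefix_cons_inj a).2 (ih (prefix_append u t) (prefix_append u t') hxy hyz)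
      | rel h => exact absurd h (irrefl a)
    | rel h =>
      cases hyz with
      | cons => exact absurd h (irrefl a)
      | rel h' => exact absurd h' (asymm h)

theorem isPrefix_of_lex_of_lex_of_isPrefix {L x y z : List β} (hx : x <+: L) (hz : z <+: L)
    (hxy : Lex r x y) (hyz : Lex r y z) : x <+: y := by
  rcases le_total x.length z.length with hxz | hzx
  · exact prefix_rfl.isPrefix_of_lex_of_lex (prefix_of_prefix_length_le hx hz hxz) hxy hyz
  · have hzy := (prefix_of_prefix_length_le hz hx hzx).isPrefix_of_lex_of_lex prefix_rfl hxy hyz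
    exact absurd hyz (not_lex_of_isPrefix hzy)

theorem isPrefix_of_lex_of_lex_of_mem_range {l₁ l₂ x y z : List β}
    (hx : x ∈ Set.range (l₁ ++ [·])) (hy : y ∈ Set.range (l₂ ++ [·]))
    (hz : z ∈ Set.range (l₁ ++ [·])) (hxy : Lex r x y) (hyz : Lex r y z) : l₁ <+: l₂ := by
  obtain ⟨a, rfl⟩ := hx
  obtain ⟨b, rfl⟩ := hy
  obtain ⟨c, rfl⟩ := hz
  rcases prefix_concat_iff.1
      ((prefix_append l₁ [a]).isPrefix_of_lex_of_lex (prefix_append l₁ [c]) hxy hyz) with h | h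
  · exact absurd hxy (not_lex_of_isPrefix (h ▸ prefix_append l₁ [a]))
  · exact h

theorem not_lex_of_mem_range_of_isPrefix {l L x y z y' : List β}
    (hx : x ∈ Set.range (l ++ [·])) (hy : y <+: L) (hz : z ∈ Set.range (l ++ [·]))
    (hy' : y' <+: L) (hxy : Lex r x y) (hyz : Lex r y z) : ¬ Lex r z y' := by
  intro hzy'
  obtain ⟨a, rfl⟩ := hx
  obtain ⟨c, rfl⟩ := hz
  rcases prefix_concat_iff.1 (isPrefix_of_lex_of_lex_of_isPrefix hy hy' hyz hzy') with rfl | hyl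
  · exact irrefl _ hyz
  · exact not_lex_of_isPrefix (hyl.trans (prefix_append l [a])) hxy

end List

namespace IsInterlacing

section General

variable {V W : Type*} {lt : V → V → Prop} {e₁ e₂ : Set V} {n : ℕ} {v : Fin n → V}

theorem mono (hv : IsInterlacing lt e₁ e₂ v) {f₁ f₂ : Set V} (h₁ : e₁ ⊆ f₁) (h₂ : e₂ ⊆ f₂) :
    IsInterlacing lt f₁ f₂ v :=
  ⟨hv.1, fun i => ⟨fun h => h₁ ((hv.2 i).1 h), fun h => h₂ ((hv.2 i).2 h)⟩⟩

theorem map (hv : IsInterlacing lt e₁ e₂ v) {lt' : W → W → Prop} (g : V → W)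
    (hg : ∀ x y, lt x y → lt' (g x) (g y)) : IsInterlacing lt' (g '' e₁) (g '' e₂) (g ∘ v) :=
  ⟨fun i j h => hg _ _ (hv.1 i j h), fun i =>
    ⟨fun h => Set.mem_image_of_mem g ((hv.2 i).1 h),
      fun h => Set.mem_image_of_mem g ((hv.2 i).2 h)⟩⟩

theorem rel (hv : IsInterlacing lt e₁ e₂ v) {i j : ℕ} (hij : i < j) (hj : j < n) :
    lt (v ⟨i, hij.trans hj⟩) (v ⟨j, hj⟩) :=
  hv.1 _ _ hij

theorem mem_left (hv : IsInterlacing lt e₁ e₂ v) {i : ℕ} (hi : i < n) (he : Even i) :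
    v ⟨i, hi⟩ ∈ e₁ :=
  (hv.2 _).1 he

theorem mem_right (hv : IsInterlacing lt e₁ e₂ v) {i : ℕ} (hi : i < n) (ho : ¬ Even i) :
    v ⟨i, hi⟩ ∈ e₂ :=
  (hv.2 _).2 ho

theorem mem_union (hv : IsInterlacing lt e₁ e₂ v) (i : Fin n) : v i ∈ e₁ ∪ e₂ := by
  by_cases h : Even (i : ℕ)
  · exact Or.inl ((hv.2 i).1 h)
  · exact Or.inr ((hv.2 i).2 h)

theorem mem_and_mem_of_add_two (hv : IsInterlacing lt e₁ e₂ v) {i : ℕ} (hi : i + 2 < n) :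
    (v ⟨i, by omega⟩ ∈ e₁ ∧ v ⟨i + 2, hi⟩ ∈ e₁) ∨ (v ⟨i, by omega⟩ ∈ e₂ ∧ v ⟨i + 2, hi⟩ ∈ e₂) := by
  by_cases h : Even i
  · exact Or.inl ⟨hv.mem_left _ h, hv.mem_left _ (by simpa [Nat.even_add] using h)⟩
  · exact Or.inr ⟨hv.mem_right _ h, hv.mem_right _ (by simpa [Nat.even_add] using h)⟩

end General

section Lists

variable {β : Type*} {r : β → β → Prop} {n : ℕ}

theorem exists_of_image_append_singleton [Std.Irrefl r] {A B : Set β} {l : List β}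
    {v : Fin n → List β} (hv : IsInterlacing (List.Lex r) ((l ++ [·]) '' A) ((l ++ [·]) '' B) v) :
    ∃ u : Fin n → β, IsInterlacing r A B u := by
  have hlast : ∀ i, ∃ a, v i = l ++ [a] := fun i => by
    rcases hv.mem_union i with ⟨a, -, ha⟩ | ⟨a, -, ha⟩ <;> exact ⟨a, ha.symm⟩
  choose u hu using hlast
  have mem_of_image {C : Set β} {i : Fin n} (h : v i ∈ (l ++ [·]) '' C) : u i ∈ C := by
    obtain ⟨a, ha, hav⟩ := h
    rw [hu i] at hav
    obtain rfl : a = u i := by simpa using List.append_cancel_left hav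
    exact ha
  refine ⟨u, fun i j hij => ?_, fun i => ⟨fun h => ?_, fun h => ?_⟩⟩
  · simpa only [hu, List.lex_append_singleton_iff] using hv.1 i j hij
  · exact mem_of_image ((hv.2 i).1 h)
  · exact mem_of_image ((hv.2 i).2 h)

variable [Std.Asymm r]

theorem le_length_of_isPrefix {L₁ L₂ : List β} {v : Fin (n + 2) → List β}
    (hv : IsInterlacing (List.Lex r) {x | x <+: L₁} {x | x <+: L₂} v) :
    n ≤ (v ⟨n, by omega⟩).length := by
  have step (i : ℕ) (hi : i + 2 < n + 2) :
      (v ⟨i, by omega⟩).length < (v ⟨i + 1, by omega⟩).length := by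
    have hlt := hv.rel (i := i) (j := i + 1) (by omega) (by omega)
    have hpre : v ⟨i, by omega⟩ <+: v ⟨i + 1, by omega⟩ := by
      rcases hv.mem_and_mem_of_add_two hi with ⟨h, h'⟩ | ⟨h, h'⟩ <;>
        exact List.isPrefix_of_lex_of_lex_of_isPrefix h h' hlt (hv.rel (by omega) hi)
    exact hpre.length_le.lt_of_ne fun h => irrefl _ (hpre.eq_of_length h ▸ hlt)
  suffices ∀ i (hi : i ≤ n), i ≤ (v ⟨i, by omega⟩).length from this n le_rfl
  intro i
  induction i with
  | zero => simp
  | succ i ih => exact fun hi => (ih (by omega)).trans_lt (step i (by omega))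

theorem eq_of_range_range {l₁ l₂ : List β} {v : Fin n → List β} (hn : 4 ≤ n)
    (hv : IsInterlacing (List.Lex r) (Set.range (l₁ ++ [·])) (Set.range (l₂ ++ [·])) v) :
    l₁ = l₂ := by
  have h₁₂ : l₁ <+: l₂ := List.isPrefix_of_lex_of_lex_of_mem_range
    (hv.mem_left (i := 0) (by omega) (by decide)) (hv.mem_right (i := 1) (by omega) (by decide))
    (hv.mem_left (i := 2) (by omega) (by decide)) (hv.rel (by omega) (by omega))
    (hv.rel (by omega) (by omega))
  have h₂₁ : l₂ <+: l₁ := List.isPrefix_of_lex_of_lex_of_mem_range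
    (hv.mem_right (i := 1) (by omega) (by decide)) (hv.mem_left (i := 2) (by omega) (by decide))
    (hv.mem_right (i := 3) (by omega) (by decide)) (hv.rel (by omega) (by omega))
    (hv.rel (by omega) (by omega))
  exact h₁₂.eq_of_length (h₁₂.length_le.antisymm h₂₁.length_le)

end Lists

end IsInterlacing

section

variable {β : Type*} {r : β → β → Prop} [Std.Asymm r] {n : ℕ}

theorem not_isInterlacing_isPrefix_range {L l : List β} {v : Fin n → List β} (hn : 5 ≤ n) :
    ¬ IsInterlacing (List.Lex r) {x | x <+: L} (Set.range (l ++ [·])) v := fun hv =>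
  List.not_lex_of_mem_range_of_isPrefix (hv.mem_right (i := 1) (by omega) (by decide))
    (hv.mem_left (i := 2) (by omega) (by decide)) (hv.mem_right (i := 3) (by omega) (by decide))
    (hv.mem_left (i := 4) (by omega) (by decide)) (hv.rel (by omega) (by omega))
    (hv.rel (by omega) (by omega)) (hv.rel (by omega) (by omega))

theorem not_isInterlacing_range_isPrefix {L l : List β} {v : Fin n → List β} (hn : 4 ≤ n) :
    ¬ IsInterlacing (List.Lex r) (Set.range (l ++ [·])) {x | x <+: L} v := fun hv =>
  List.not_lex_of_mem_range_of_isPrefix (hv.mem_left (i := 0) (by omega) (by decide))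
    (hv.mem_right (i := 1) (by omega) (by decide)) (hv.mem_left (i := 2) (by omega) (by decide))
    (hv.mem_right (i := 3) (by omega) (by decide)) (hv.rel (by omega) (by omega))
    (hv.rel (by omega) (by omega)) (hv.rel (by omega) (by omega))

end

instance (k n : ℕ) : Std.Asymm (HVertLT k n) := by
  induction n with
  | zero => exact ⟨fun a b (h : a < b) => h.asymm⟩
  | succ n ih =>
    exact ⟨fun a b (h : List.Lex (HVertLT k n) a.1 b.1) => asymm (r := List.Lex (HVertLT k n)) h⟩

theorem HEdge.succ_cases {k n : ℕ} {e : Finset (HVert k (n + 1))} (he : HEdge k (n + 1) e) :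
    (∃ L : List (HVert k n), Subtype.val '' (e : Set (HVert k (n + 1))) ⊆ {x | x <+: L}) ∨
      ∃ (l : List (HVert k n)) (e' : Finset (HVert k n)), HEdge k n e' ∧
        Subtype.val '' (e : Set (HVert k (n + 1))) = (l ++ [·]) '' e' := by
  rcases he with ⟨leaf, -, rfl⟩ | ⟨l, -, e', he', rfl⟩
  · refine Or.inl ⟨leaf.1, ?_⟩
    rintro _ ⟨x, hx, rfl⟩
    obtain ⟨i, -, rfl⟩ := Finset.mem_image.1 hx
    exact List.take_prefix i leaf.1
  · exact Or.inr ⟨l, e', he', by rw [Finset.coe_image, Set.image_image]⟩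

theorem HEdge.not_isInterlacing {k : ℕ} (hk : 3 ≤ k) :
    ∀ {n : ℕ} {e₁ e₂ : Finset (HVert k n)}, HEdge k n e₁ → HEdge k n e₂ → e₁ ≠ e₂ →
      ∀ v : Fin (k + 2) → HVert k n, ¬ IsInterlacing (HVertLT k n) e₁ e₂ v
  | 0, _, _, he₁, he₂, hne, _, _ => hne (he₁.trans he₂.symm)
  | n + 1, e₁, e₂, he₁, he₂, hne, v, hv => by
    have hw := hv.map Subtype.val (lt' := List.Lex (HVertLT k n)) fun _ _ h => h
    rcases he₁.succ_cases with ⟨L₁, hL₁⟩ | ⟨l₁, e₁', he₁', hS₁⟩ <;>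
      rcases he₂.succ_cases with ⟨L₂, hL₂⟩ | ⟨l₂, e₂', he₂', hS₂⟩
    · exact (hw.mono hL₁ hL₂).le_length_of_isPrefix.not_gt (v _).2
    · exact not_isInterlacing_isPrefix_range (by omega)
        (hw.mono hL₁ (hS₂.trans_subset (Set.image_subset_range _ _)))
    · exact not_isInterlacing_range_isPrefix (by omega)
        (hw.mono (hS₁.trans_subset (Set.image_subset_range _ _)) hL₂)
    · obtain rfl := (hw.mono (hS₁.trans_subset (Set.image_subset_range _ _))
        (hS₂.trans_subset (Set.image_subset_range _ _))).eq_of_range_range (by omega)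
      obtain ⟨u, hu⟩ := (hS₁ ▸ hS₂ ▸ hw).exists_of_image_append_singleton
      refine HEdge.not_isInterlacing hk he₁' he₂' (fun h => hne ?_) u hu
      exact Finset.coe_injective
        (Subtype.val_injective.image_injective (hS₁.trans (h ▸ hS₂.symm)))

theorem stmt_7_general (k m : ℕ) (hk : 3 ≤ k) :
    ¬ ∃ e₁ e₂ : Finset (HVert k (m - 1)), HEdge k (m - 1) e₁ ∧ HEdge k (m - 1) e₂ ∧
        e₁ ≠ e₂ ∧ ∃ v : Fin (k + 2) → HVert k (m - 1),
          (∀ i j : Fin (k + 2), i < j → HVertLT k (m - 1) (v i) (v j)) ∧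
          ∀ i : Fin (k + 2), (Even (i : ℕ) → v i ∈ e₁) ∧ (¬ Even (i : ℕ) → v i ∈ e₂) := by
  rintro ⟨e₁, e₂, he₁, he₂, hne, v, hv⟩
  exact HEdge.not_isInterlacing hk he₁ he₂ hne v hv

/-- For every `k ≥ 3` and `m ≥ 2`, the hypergraph `H^{k,m}` is not
`(k+2)`-interlacing with respect to the DFS order `≺^{k,m}`. -/
theorem stmt_7 (k m : ℕ) (hk : 3 ≤ k) (hm : 2 ≤ m) :
    ¬ ∃ e₁ e₂ : Finset (HVert k (m - 1)), HEdge k (m - 1) e₁ ∧ HEdge k (m - 1) e₂ ∧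
        e₁ ≠ e₂ ∧ ∃ v : Fin (k + 2) → HVert k (m - 1),
          (∀ i j : Fin (k + 2), i < j → HVertLT k (m - 1) (v i) (v j)) ∧
          ∀ i : Fin (k + 2), (Even (i : ℕ) → v i ∈ e₁) ∧ (¬ Even (i : ℕ) → v i ∈ e₂) :=
  stmt_7_general k m hk
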